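/- Let X be a vector lattice satisfying condition (*): for every band B in X and every x ∉ B^d there exists a semi-component of x belonging to B. Then every maximal d-independent system in X is a d-basis. -/

import Mathlib

/-- Disjointness in a vector lattice. -/
def disjt {X : Type*} [Lattice X] [AddCommGroup X] (x y : X) : Prop := |x| ⊓ |y| = 0

/-- Disjoint complement of a set. -/
def dComp {X : Type*} [Lattice X] [AddCommGroup X] (S : Set X) : Set X :=
  {x | ∀ y ∈ S, disjt x y}

/-- A band (in an Archimedean vector lattice) is a disjoint complement. -/
def IsBand {X : Type*} [Lattice X] [AddCommGroup X] (B : Set X) : Prop :=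
  ∃ S : Set X, B = dComp S

/-- A projection band. -/
def IsProjBand {X : Type*} [Lattice X] [AddCommGroup X] (B : Set X) : Prop :=
  IsBand B ∧ ∀ x : X, ∃ b ∈ B, ∃ c ∈ dComp B, x = b + c

/-- `P` is the band-projection onto the projection band `B`. -/
def IsBandProjOnto {X : Type*} [Lattice X] [AddCommGroup X] [Module ℝ X]
    (B : Set X) (P : X →ₗ[ℝ] X) : Prop :=
  IsProjBand B ∧ ∀ x : X, P x ∈ B ∧ x - P x ∈ dComp B

/-- `P` is a band-projection. -/
def IsBandProj {X : Type*} [Lattice X] [AddCommGroup X] [Module ℝ X]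
    (P : X →ₗ[ℝ] X) : Prop := ∃ B : Set X, IsBandProjOnto B P

/-- A band preserving operator. -/
def BandPreserving {X : Type*} [Lattice X] [AddCommGroup X] [Module ℝ X]
    (T : X →ₗ[ℝ] X) : Prop := ∀ x y : X, disjt x y → disjt (T x) y

/-- A cofinal family of projection bands. -/
def CofinalProjBands (X : Type*) [Lattice X] [AddCommGroup X] : Prop :=
  ∀ B : Set X, IsBand B → B ≠ {0} →
    ∃ B' : Set X, IsProjBand B' ∧ B' ≠ {0} ∧ B' ⊆ B

/-- d-independence of a family (band-free sense). -/
def dIndepFam {X : Type*} [Lattice X] [AddCommGroup X] [Module ℝ X]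
    {ι : Type*} (f : ι → X) : Prop :=
  ∀ B : Set X, IsBand B → ∀ (t : Finset ι) (c : ι → ℝ),
    (∀ j ∈ t, c j ≠ 0) → (∑ j ∈ t, c j • f j) ∈ dComp B → ∀ j ∈ t, f j ∈ dComp B

/-- d-independence of a set (band-free sense). -/
def dIndepSet {X : Type*} [Lattice X] [AddCommGroup X] [Module ℝ X]
    (s : Set X) : Prop := dIndepFam (fun x : s => (x : X))

/-- A full system of pairwise disjoint bands. -/
def FullDisjBands {X : Type*} [Lattice X] [AddCommGroup X] (𝒞 : Set (Set X)) : Prop :=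
  (∀ B ∈ 𝒞, IsBand B) ∧
  (∀ B ∈ 𝒞, ∀ B' ∈ 𝒞, B ≠ B' → ∀ a ∈ B, ∀ b ∈ B', disjt a b) ∧
  (∀ z : X, (∀ B ∈ 𝒞, z ∈ dComp B) → z = 0)

/-- A d-basis (band-free sense). -/
def IsDBasis {X : Type*} [Lattice X] [AddCommGroup X] [Module ℝ X]
    (s : Set X) : Prop :=
  dIndepSet s ∧ ∀ x : X, ∃ 𝒞 : Set (Set X), FullDisjBands 𝒞 ∧
    ∀ B ∈ 𝒞, ∃ (t : Finset X) (c : X → ℝ), (↑t ⊆ s) ∧ (∀ e ∈ t, c e ≠ 0) ∧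
      (x - ∑ e ∈ t, c e • e) ∈ dComp B

/-- `b` is a semi-component of `x`. -/
def IsSemiComponent {X : Type*} [Lattice X] [AddCommGroup X] [Module ℝ X]
    (x b : X) : Prop :=
  b ≠ 0 ∧ ∃ (𝒞 : Set (Set X)) (c : Set X → ℝ), FullDisjBands 𝒞 ∧
    ∀ B ∈ 𝒞, (b - c B • x) ∈ dComp B

/-- Condition (*): every band has a semi-component of every element not disjoint from it. -/
def CondStar (X : Type*) [Lattice X] [AddCommGroup X] [Module ℝ X] : Prop :=
  ∀ B : Set X, IsBand B → ∀ x : X, x ∉ dComp B → ∃ b ∈ B, IsSemiComponent x b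
/-- Projection-band-sense d-independence of a family. -/
def dIndepProjFam {X : Type*} [Lattice X] [AddCommGroup X] [Module ℝ X]
    {ι : Type*} (f : ι → X) : Prop :=
  ∀ (B : Set X) (P : X →ₗ[ℝ] X), IsBandProjOnto B P →
    ∀ (t : Finset ι) (c : ι → ℝ), (∑ j ∈ t, c j • P (f j)) = 0 →
      ∀ j ∈ t, P (f j) ≠ 0 → c j = 0

/-- Projection-band-sense d-independence of a set. -/
def dIndepProjSet {X : Type*} [Lattice X] [AddCommGroup X] [Module ℝ X]
    (s : Set X) : Prop := dIndepProjFam (fun x : s => (x : X))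

/-- Lateral completeness. -/
def LatComplete (X : Type*) [Lattice X] [AddCommGroup X] : Prop :=
  ∀ S : Set X, (∀ x ∈ S, 0 ≤ x) → S.Pairwise disjt → ∃ b : X, IsLUB S b

/-- Lateral completeness of a subset (sups taken relative to the subset). -/
def LatCompleteIn {X : Type*} [Lattice X] [AddCommGroup X] (X₀ : Set X) : Prop :=
  ∀ S : Set X, S ⊆ X₀ → (∀ x ∈ S, 0 ≤ x) → S.Pairwise disjt →
    ∃ b ∈ X₀, b ∈ upperBounds S ∧ ∀ b' ∈ X₀, b' ∈ upperBounds S → b ≤ b'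

/-- Dedekind completeness of a subset (sups relative to the subset). -/
def DedekindCompleteIn {X : Type*} [Lattice X] [AddCommGroup X] (X₀ : Set X) : Prop :=
  ∀ S : Set X, S ⊆ X₀ → S.Nonempty → (∃ u ∈ X₀, u ∈ upperBounds S) →
    ∃ b ∈ X₀, b ∈ upperBounds S ∧ ∀ b' ∈ X₀, b' ∈ upperBounds S → b ≤ b'

/-- Universal completeness of a subset. -/
def UnivCompleteIn {X : Type*} [Lattice X] [AddCommGroup X] (X₀ : Set X) : Prop :=
  LatCompleteIn X₀ ∧ DedekindCompleteIn X₀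

/-- Disjoint complement of `S` relative to the sublattice `X₀`. -/
def dCompIn {X : Type*} [Lattice X] [AddCommGroup X] (X₀ S : Set X) : Set X :=
  {x | x ∈ X₀ ∧ ∀ y ∈ S, disjt x y}

/-- Bands of the sublattice `X₀`. -/
def IsBandIn {X : Type*} [Lattice X] [AddCommGroup X] (X₀ B : Set X) : Prop :=
  ∃ S : Set X, S ⊆ X₀ ∧ B = dCompIn X₀ S

/-- Projection bands of the sublattice `X₀`. -/
def IsProjBandIn {X : Type*} [Lattice X] [AddCommGroup X] (X₀ B : Set X) : Prop :=
  IsBandIn X₀ B ∧ ∀ x ∈ X₀, ∃ b ∈ B, ∃ c ∈ dCompIn X₀ B, x = b + c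

/-- A band `B` is principally universally complete if each of its principal bands
is universally complete. -/
def PrincUnivCompleteIn {X : Type*} [Lattice X] [AddCommGroup X] (B : Set X) : Prop :=
  ∀ u ∈ B, UnivCompleteIn (dCompIn B (dCompIn B {u}))

/-- d-independence of a family relative to the sublattice `X₀`. -/
def dIndepFamIn {X : Type*} [Lattice X] [AddCommGroup X] [Module ℝ X]
    (X₀ : Set X) {ι : Type*} (f : ι → X) : Prop :=
  ∀ B : Set X, IsBandIn X₀ B → ∀ (t : Finset ι) (c : ι → ℝ),
    (∀ j ∈ t, c j ≠ 0) → (∑ j ∈ t, c j • f j) ∈ dCompIn X₀ B →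
      ∀ j ∈ t, f j ∈ dCompIn X₀ B

/-- A full system of pairwise disjoint bands of the sublattice `X₀`. -/
def FullDisjBandsIn {X : Type*} [Lattice X] [AddCommGroup X]
    (X₀ : Set X) (𝒞 : Set (Set X)) : Prop :=
  (∀ B ∈ 𝒞, IsBandIn X₀ B) ∧
  (∀ B ∈ 𝒞, ∀ B' ∈ 𝒞, B ≠ B' → ∀ a ∈ B, ∀ b ∈ B', disjt a b) ∧
  (∀ z ∈ X₀, (∀ B ∈ 𝒞, z ∈ dCompIn X₀ B) → z = 0)

/-- A d-basis of the sublattice `X₀`. -/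
def IsDBasisIn {X : Type*} [Lattice X] [AddCommGroup X] [Module ℝ X]
    (X₀ : Set X) (s : Set X) : Prop :=
  dIndepFamIn X₀ (fun x : s => (x : X)) ∧
  ∀ x ∈ X₀, ∃ 𝒞 : Set (Set X), FullDisjBandsIn X₀ 𝒞 ∧
    ∀ B ∈ 𝒞, ∃ (t : Finset X) (c : X → ℝ), (↑t ⊆ s) ∧ (∀ e ∈ t, c e ≠ 0) ∧
      (x - ∑ e ∈ t, c e • e) ∈ dCompIn X₀ B

/-- An essentially constant continuous function. -/
def EssConst {K : Type*} [TopologicalSpace K] (f : C(K, ℝ)) : Prop :=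
  ∀ G : Set K, IsOpen G → G.Nonempty →
    ∃ G₁ ⊆ G, IsOpen G₁ ∧ G₁.Nonempty ∧ ∃ c : ℝ, ∀ t ∈ G₁, f t = c


section basics
set_option linter.unusedSectionVars false
variable {X : Type*} [Lattice X] [AddCommGroup X] [CovariantClass X X (· + ·) (· ≤ ·)]

lemma eq_zero_of_abs_eq_zero {x : X} (h : |x| = 0) : x = 0 :=
  le_antisymm (h ▸ le_abs_self x) (neg_nonpos.mp (h ▸ neg_le_abs x))

lemma disjt_symm {x y : X} (h : disjt x y) : disjt y x := by rwa [disjt, inf_comm]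

lemma disjt_self {x : X} (h : disjt x x) : x = 0 := by
  rw [disjt, inf_idem] at h; exact eq_zero_of_abs_eq_zero h

lemma disjt_of_le {a y : X} (h : a ⊓ |y| = 0) {x : X} (hx : |x| ≤ a) : disjt x y :=
  le_antisymm (h ▸ inf_le_inf_right _ hx) (le_inf (abs_nonneg _) (abs_nonneg _))

lemma disjt_mono {x' x y : X} (hle : |x'| ≤ |x|) (h : disjt x y) : disjt x' y :=
  disjt_of_le h hle

lemma zero_disjt (y : X) : disjt 0 y := by
  rw [disjt, abs_zero]; exact inf_eq_left.mpr (abs_nonneg y)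

lemma abs_add_lat (a b : X) : |a + b| ≤ |a| + |b| :=
  abs_le'.2 ⟨add_le_add (le_abs_self a) (le_abs_self b),
    by rw [neg_add]; exact add_le_add (neg_le_abs a) (neg_le_abs b)⟩

lemma inf_add_disjt {a b c : X} (ha : 0 ≤ a) (hb : 0 ≤ b) (hc : 0 ≤ c)
    (h1 : a ⊓ c = 0) (h2 : b ⊓ c = 0) : (a + b) ⊓ c = 0 := by
  set d := (a + b) ⊓ c with hd
  have hd0 : 0 ≤ d := le_inf (add_nonneg ha hb) hc
  have h3 : d - b ≤ a := sub_le_iff_le_add.mpr inf_le_left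
  have h4 : d - b ≤ c := le_trans (sub_le_self d hb) inf_le_right
  have h5 : d - b ≤ 0 := h1 ▸ le_inf h3 h4
  have h6 : d ≤ b := by simpa [sub_nonpos] using h5
  exact le_antisymm (h2 ▸ le_inf h6 inf_le_right) hd0

lemma disjt_add {x y z : X} (h1 : disjt x z) (h2 : disjt y z) : disjt (x + y) z :=
  disjt_of_le (inf_add_disjt (abs_nonneg x) (abs_nonneg y) (abs_nonneg z) h1 h2)
    (abs_add_lat x y)

lemma disjt_neg {x y : X} (h : disjt x y) : disjt (-x) y :=
  disjt_of_le h (abs_neg x).le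

lemma disjt_nsmul {a c : X} (ha : 0 ≤ a) (hc : 0 ≤ c) (h : a ⊓ c = 0) (n : ℕ) :
    (n • a) ⊓ c = 0 := by
  induction n with
  | zero => simpa using inf_eq_left.mpr hc
  | succ n ih =>
      rw [succ_nsmul]
      exact inf_add_disjt (nsmul_nonneg ha n) ha hc ih h
end basics

section smul
set_option linter.unusedSectionVars false
variable {X : Type*} [Lattice X] [AddCommGroup X] [Module ℝ X]
  [CovariantClass X X (· + ·) (· ≤ ·)] [PosSMulMono ℝ X]

lemma smul_nonneg_lat {r : ℝ} (hr : 0 ≤ r) {x : X} (hx : 0 ≤ x) : 0 ≤ r • x := by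
  have := smul_le_smul_of_nonneg_left hx hr
  simpa using this

lemma abs_smul_le (r : ℝ) (x : X) : |r • x| ≤ |r| • |x| := by
  rcases le_or_gt 0 r with hr | hr
  · rw [abs_of_nonneg hr]
    refine abs_le'.2 ⟨smul_le_smul_of_nonneg_left (le_abs_self x) hr, ?_⟩
    have : r • (-x) ≤ r • |x| := smul_le_smul_of_nonneg_left (neg_le_abs x) hr
    simpa [smul_neg] using this
  · have hr' : 0 ≤ -r := by linarith
    rw [abs_of_neg hr]
    refine abs_le'.2 ⟨?_, ?_⟩
    · have : (-r) • (-x) ≤ (-r) • |x| := smul_le_smul_of_nonneg_left (neg_le_abs x) hr'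
      simpa [smul_neg, neg_smul, neg_neg] using this
    · have : (-r) • x ≤ (-r) • |x| := smul_le_smul_of_nonneg_left (le_abs_self x) hr'
      simpa [neg_smul, neg_neg] using this

lemma disjt_smul (r : ℝ) {x y : X} (h : disjt x y) : disjt (r • x) y := by
  obtain ⟨n, hn⟩ := exists_nat_ge |r|
  have h1 : |r • x| ≤ (n : ℝ) • |x| := by
    refine le_trans (abs_smul_le r x) ?_
    have h0 : (0:X) ≤ ((n : ℝ) - |r|) • |x| := smul_nonneg_lat (by linarith) (abs_nonneg x)
    have := add_le_add (le_refl (|r| • |x|)) h0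
    calc |r| • |x| = |r| • |x| + 0 := (add_zero _).symm
    _ ≤ |r| • |x| + ((n:ℝ) - |r|) • |x| := this
    _ = (n:ℝ) • |x| := by rw [← add_smul]; ring_nf
  rw [Nat.cast_smul_eq_nsmul] at h1
  exact disjt_of_le (disjt_nsmul (abs_nonneg x) (abs_nonneg y) h n) h1
end smul

section dcomp
set_option linter.unusedSectionVars false
variable {X : Type*} [Lattice X] [AddCommGroup X] [CovariantClass X X (· + ·) (· ≤ ·)]

lemma dComp_solid {S : Set X} {x w : X} (hx : x ∈ dComp S) (h : |w| ≤ |x|) : w ∈ dComp S :=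
  fun y hy => disjt_mono h (hx y hy)

lemma zero_mem_dComp (S : Set X) : (0:X) ∈ dComp S := fun y _ => zero_disjt y

lemma dComp_antitone {S T : Set X} (h : S ⊆ T) : dComp T ⊆ dComp S :=
  fun _ hx y hy => hx y (h hy)

lemma subset_dComp_dComp (S : Set X) : S ⊆ dComp (dComp S) :=
  fun x hx y hy => disjt_symm (hy x hx)

lemma add_mem_dComp {S : Set X} {x y : X} (hx : x ∈ dComp S) (hy : y ∈ dComp S) :
    x + y ∈ dComp S := fun z hz => disjt_add (hx z hz) (hy z hz)

lemma neg_mem_dComp {S : Set X} {x : X} (hx : x ∈ dComp S) : -x ∈ dComp S :=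
  fun z hz => disjt_neg (hx z hz)

lemma sub_mem_dComp {S : Set X} {x y : X} (hx : x ∈ dComp S) (hy : y ∈ dComp S) :
    x - y ∈ dComp S := by
  rw [sub_eq_add_neg]; exact add_mem_dComp hx (neg_mem_dComp hy)

lemma inter_isBand {B B' : Set X} (hB : IsBand B) (hB' : IsBand B') : IsBand (B ∩ B') := by
  obtain ⟨S, rfl⟩ := hB; obtain ⟨T, rfl⟩ := hB'
  refine ⟨S ∪ T, ?_⟩
  ext x
  constructor
  · rintro ⟨h1, h2⟩ y hy
    rcases hy with hy | hy
    exacts [h1 y hy, h2 y hy]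
  · intro h
    exact ⟨fun y hy => h y (Or.inl hy), fun y hy => h y (Or.inr hy)⟩

lemma univ_isBand : IsBand (Set.univ : Set X) := by
  refine ⟨{0}, ?_⟩
  ext x
  simp only [Set.mem_univ, true_iff, dComp, Set.mem_setOf_eq, Set.mem_singleton_iff]
  rintro y rfl
  rw [disjt, abs_zero]
  exact inf_eq_right.mpr (abs_nonneg x)

end dcomp

section dcomp2
set_option linter.unusedSectionVars false
variable {X : Type*} [Lattice X] [AddCommGroup X] [Module ℝ X]
  [CovariantClass X X (· + ·) (· ≤ ·)] [PosSMulMono ℝ X]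

lemma smul_mem_dComp {S : Set X} {x : X} (r : ℝ) (hx : x ∈ dComp S) : r • x ∈ dComp S :=
  fun z hz => disjt_smul r (hx z hz)

lemma sum_mem_dComp {S : Set X} {ι : Type*} {t : Finset ι} {f : ι → X}
    (h : ∀ i ∈ t, f i ∈ dComp S) : (∑ i ∈ t, f i) ∈ dComp S := by
  classical
  induction t using Finset.induction with
  | empty => simpa using zero_mem_dComp S
  | insert _ _ hnot ih =>
      rw [Finset.sum_insert hnot]
      exact add_mem_dComp (h _ (Finset.mem_insert_self _ _))
        (ih fun i hi => h i (Finset.mem_insert_of_mem hi))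

/-- Set-level characterization of d-independence. -/
lemma dIndepSet_iff {s : Set X} : dIndepSet s ↔
    ∀ B : Set X, IsBand B → ∀ t : Finset X, ↑t ⊆ s → ∀ c : X → ℝ,
      (∀ e ∈ t, c e ≠ 0) → (∑ e ∈ t, c e • e) ∈ dComp B → ∀ e ∈ t, e ∈ dComp B := by
  classical
  constructor
  · intro hind B hB t hts c hc hsum e het
    -- build a finset of the subtype
    set emb : {x // x ∈ t} ↪ ↥s :=
      ⟨fun e => ⟨e.1, hts e.2⟩, fun a b hab => Subtype.ext (by have h' := congrArg Subtype.val hab; exact h')⟩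
    set tsub : Finset ↥s := t.attach.map emb
    have hsum' : (∑ j ∈ tsub, (c j) • (j : X)) = ∑ e ∈ t, c e • e := by
      rw [Finset.sum_map]
      exact Finset.sum_attach t fun e => c e • e
    have := hind B hB tsub (fun j => c j)
      (by
        intro j hj
        simp only [tsub, Finset.mem_map, Finset.mem_attach, true_and] at hj
        obtain ⟨a, ha⟩ := hj
        subst ha
        exact hc a.1 a.2)
      (by rwa [hsum'])
    exact this ⟨e, hts het⟩ (by
      simp only [tsub, Finset.mem_map, Finset.mem_attach, true_and]
      exact ⟨⟨e, het⟩, rfl⟩)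
  · intro h B hB tsub c hc hsum j hj
    set tX : Finset X := tsub.image Subtype.val with htX
    have hinj : Set.InjOn (Subtype.val : ↥s → X) ↑tsub :=
      fun a _ b _ hab => Subtype.ext hab
    set cX : X → ℝ := fun e => if he : e ∈ s then c ⟨e, he⟩ else 0 with hcX
    have hval : ∀ j : ↥s, cX (j : X) = c j := by
      intro j; simp only [cX, j.2, dif_pos]
    have hsum' : (∑ e ∈ tX, cX e • e) = ∑ j ∈ tsub, c j • (j : X) := by
      rw [htX, Finset.sum_image (fun a ha b hb hab => hinj ha hb hab)]
      exact Finset.sum_congr rfl fun j _ => by rw [hval]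
    have := h B hB tX (by
        intro e he
        simp only [tX, Finset.coe_image, Set.mem_image] at he
        obtain ⟨a, _, rfl⟩ := he
        exact a.2)
      cX (by
        intro e he
        simp only [tX, Finset.mem_image] at he
        obtain ⟨a, ha, rfl⟩ := he
        rw [hval]; exact hc a ha)
      (by rwa [hsum'])
    exact this (j : X) (Finset.mem_image_of_mem _ hj)
end dcomp2

section main
set_option linter.unusedSectionVars false
variable {X : Type*} [Lattice X] [AddCommGroup X] [Module ℝ X]
  [CovariantClass X X (· + ·) (· ≤ ·)] [PosSMulMono ℝ X]

lemma band_solid {B : Set X} (hB : IsBand B) {x w : X} (hx : x ∈ B) (h : |w| ≤ |x|) :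
    w ∈ B := by
  obtain ⟨S, rfl⟩ := hB
  exact dComp_solid hx h

lemma not_mem_dComp {S : Set X} {x : X} (h : x ∉ dComp S) : ∃ y ∈ S, ¬ disjt x y := by
  by_contra hc
  push_neg at hc
  exact h fun y hy => hc y hy

/-- Key step: every nonzero `b` admits, on some band not disjoint from it, a finite
expansion in the elements of a maximal d-independent set `s`. -/
lemma key_expansion (s : Set X) (hind : dIndepSet s)
    (hmax : ∀ t : Set X, dIndepSet t → s ⊆ t → t = s) {b : X} (hb0 : b ≠ 0) :
    ∃ B : Set X, IsBand B ∧ b ∉ dComp B ∧ ∃ (t : Finset X) (c : X → ℝ),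
      (↑t ⊆ s) ∧ (∀ e ∈ t, c e ≠ 0) ∧ (b - ∑ e ∈ t, c e • e) ∈ dComp B := by
  classical
  by_cases hbs : b ∈ s
  · refine ⟨Set.univ, univ_isBand, ?_, {b}, fun _ => 1, ?_, ?_, ?_⟩
    · intro h
      exact hb0 (disjt_self (h b (Set.mem_univ b)))
    · simpa using hbs
    · simp
    · simp only [Finset.sum_singleton, one_smul, sub_self]
      exact zero_mem_dComp _
  · have hne : insert b s ≠ s := fun h => hbs (h ▸ Set.mem_insert b s)
    have hdep : ¬ dIndepSet (insert b s) :=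
      fun h => hne (hmax _ h (Set.subset_insert b s))
    rw [dIndepSet_iff] at hdep
    push_neg at hdep
    obtain ⟨B, hB, t, hts, c, hc, hsum, e₀, he₀t, he₀⟩ := hdep
    have hbt : b ∈ t := by
      by_contra hbt
      have hts' : ↑t ⊆ s := by
        intro e he
        rcases hts he with rfl | hes
        · exact absurd he hbt
        · exact hes
      exact he₀ (dIndepSet_iff.mp hind B hB t hts' c hc hsum e₀ he₀t)
    have herase : ↑(t.erase b) ⊆ s := by
      intro e he
      have he' : e ∈ t.erase b := he
      rcases hts (Finset.mem_of_mem_erase he') with rfl | hes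
      · exact absurd rfl (Finset.ne_of_mem_erase he')
      · exact hes
    have hbB : b ∉ dComp B := by
      intro hbB
      have h1 : (∑ e ∈ t.erase b, c e • e) ∈ dComp B := by
        have heq : ∑ e ∈ t.erase b, c e • e = (∑ e ∈ t, c e • e) - c b • b := by
          rw [← Finset.add_sum_erase t (fun e => c e • e) hbt]
          abel
        rw [heq]
        exact sub_mem_dComp hsum (smul_mem_dComp _ hbB)
      have hall := dIndepSet_iff.mp hind B hB (t.erase b) herase c
        (fun e he => hc e (Finset.mem_of_mem_erase he)) h1
      rcases eq_or_ne e₀ b with rfl | hne₀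
      · exact he₀ hbB
      · exact he₀ (hall e₀ (Finset.mem_erase.mpr ⟨hne₀, he₀t⟩))
    have hcb : c b ≠ 0 := hc b hbt
    refine ⟨B, hB, hbB, t.erase b, fun e => -((c b)⁻¹ * c e), herase, ?_, ?_⟩
    · intro e he
      exact neg_ne_zero.mpr (mul_ne_zero (inv_ne_zero hcb) (hc e (Finset.mem_of_mem_erase he)))
    · have h1 : (c b)⁻¹ • (∑ e ∈ t, c e • e) ∈ dComp B := smul_mem_dComp _ hsum
      have heq : (c b)⁻¹ • (∑ e ∈ t, c e • e)
          = b - ∑ e ∈ t.erase b, (-((c b)⁻¹ * c e)) • e := by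
        rw [← Finset.add_sum_erase t (fun e => c e • e) hbt, smul_add, smul_smul,
          inv_mul_cancel₀ hcb, one_smul, Finset.smul_sum]
        rw [sub_eq_add_neg, ← Finset.sum_neg_distrib]
        congr 1
        refine Finset.sum_congr rfl fun e _ => ?_
        rw [smul_smul, neg_smul, neg_neg]
      rwa [heq] at h1
end main

/-- If a vector lattice satisfies condition (*), then every maximal
d-independent system is a d-basis. -/
theorem maximal_dIndependent_is_dBasis_of_condStar
    {X : Type*} [Lattice X] [AddCommGroup X] [Module ℝ X]
    [CovariantClass X X (· + ·) (· ≤ ·)] [PosSMulMono ℝ X]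
    (hstar : CondStar X) (s : Set X)
    (hind : dIndepSet s)
    (hmax : ∀ t : Set X, dIndepSet t → s ⊆ t → t = s) :
    IsDBasis s := by
  classical
  refine ⟨hind, fun x => ?_⟩
  set Good : Set X → Prop := fun B => IsBand B ∧ ∃ (t : Finset X) (c : X → ℝ),
      (↑t ⊆ s) ∧ (∀ e ∈ t, c e ≠ 0) ∧ (x - ∑ e ∈ t, c e • e) ∈ dComp B with hGood
  set 𝒮 : Set (Set (Set X)) := {𝒜 | (∀ B ∈ 𝒜, Good B) ∧
      ∀ B ∈ 𝒜, ∀ B' ∈ 𝒜, B ≠ B' → ∀ a ∈ B, ∀ b ∈ B', disjt a b} with h𝒮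
  obtain ⟨𝒞, h𝒞mem, hmax𝒞⟩ := zorn_subset 𝒮 (by
    intro ch hch hchain
    refine ⟨⋃₀ ch, ⟨?_, ?_⟩, fun A hA => Set.subset_sUnion_of_mem hA⟩
    · rintro B ⟨A, hAch, hBA⟩
      exact (hch hAch).1 B hBA
    · rintro B1 ⟨A1, hA1, hB1⟩ B2 ⟨A2, hA2, hB2⟩ hne a ha bb hb
      rcases hchain.total hA1 hA2 with h | h
      · exact (hch hA2).2 B1 (h hB1) B2 hB2 hne a ha bb hb
      · exact (hch hA1).2 B1 hB1 B2 (h hB2) hne a ha bb hb)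
  refine ⟨𝒞, ⟨fun B hB => (h𝒞mem.1 B hB).1, h𝒞mem.2, ?_⟩,
    fun B hB => (h𝒞mem.1 B hB).2⟩
  -- fullness
  intro z hz
  by_contra hz0
  set B₀ : Set X := dComp (⋃₀ 𝒞) with hB₀def
  have hB₀band : IsBand B₀ := ⟨_, rfl⟩
  have hzB₀ : z ∈ B₀ := by
    rintro y ⟨B, hB𝒞, hyB⟩
    exact hz B hB𝒞 y hyB
  -- any good subband of B₀ must belong to 𝒞
  have hins : ∀ B' : Set X, Good B' → B' ⊆ B₀ → B' ∈ 𝒞 := by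
    intro B' hG hsub
    have hmem : (insert B' 𝒞) ∈ 𝒮 := by
      constructor
      · rintro B (rfl | hB)
        · exact hG
        · exact h𝒞mem.1 B hB
      · rintro B1 (rfl | h1) B2 (rfl | h2) hne a ha bb hb
        · exact absurd rfl hne
        · exact hsub ha bb ⟨B2, h2, hb⟩
        · exact disjt_symm (hsub hb a ⟨B1, h1, ha⟩)
        · exact h𝒞mem.2 B1 h1 B2 h2 hne a ha bb hb
    have := hmax𝒞 hmem (Set.subset_insert B' 𝒞)
    exact this (Set.mem_insert B' 𝒞)
  by_cases hx0 : x ∈ dComp B₀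
  · have hB₀good : Good B₀ := by
      refine ⟨hB₀band, ∅, fun _ => 1, by simp, by simp, ?_⟩
      simpa using hx0
    have hB₀𝒞 : B₀ ∈ 𝒞 := hins B₀ hB₀good subset_rfl
    exact hz0 (disjt_self (hz B₀ hB₀𝒞 z hzB₀))
  · obtain ⟨b, hbB₀, hb0, 𝒟, cD, hD, hsemi⟩ := hstar B₀ hB₀band x hx0
    obtain ⟨B'', hB''band, hbB'', t, c, hts, hc, hexp⟩ := key_expansion s hind hmax hb0
    obtain ⟨u, huB'', hbu⟩ := not_mem_dComp hbB''
    set u' : X := |b| ⊓ |u| with hu'def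
    have hu'0 : u' ≠ 0 := fun h => hbu h
    have hu'nonneg : (0:X) ≤ u' := le_inf (abs_nonneg b) (abs_nonneg u)
    have habs_u' : |u'| = u' := abs_of_nonneg hu'nonneg
    have hu'B₀ : u' ∈ B₀ := dComp_solid hbB₀ (habs_u'.le.trans inf_le_left)
    obtain ⟨D₀, hD₀𝒟, hu'D₀⟩ : ∃ D₀ ∈ 𝒟, u' ∉ dComp D₀ := by
      by_contra h
      push_neg at h
      exact hu'0 (hD.2.2 u' h)
    have hD₀band : IsBand D₀ := hD.1 D₀ hD₀𝒟
    have hc₀ : cD D₀ ≠ 0 := by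
      intro h0
      have hbD₀ : b ∈ dComp D₀ := by
        have := hsemi D₀ hD₀𝒟
        rwa [h0, zero_smul, sub_zero] at this
      exact hu'D₀ (dComp_solid hbD₀ (habs_u'.le.trans inf_le_left))
    obtain ⟨w, hwD₀, hu'w⟩ := not_mem_dComp hu'D₀
    set w' : X := u' ⊓ |w| with hw'def
    have hw'0 : w' ≠ 0 := by
      intro h
      exact hu'w (by rw [disjt, habs_u']; exact h)
    have hw'nonneg : (0:X) ≤ w' := le_inf hu'nonneg (abs_nonneg w)
    have habs_w' : |w'| = w' := abs_of_nonneg hw'nonneg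
    have hw'D₀ : w' ∈ D₀ := band_solid hD₀band hwD₀ (habs_w'.le.trans inf_le_right)
    have hw'B₀ : w' ∈ B₀ :=
      dComp_solid hbB₀ (habs_w'.le.trans (le_trans inf_le_left inf_le_left))
    have hw'B'' : w' ∈ B'' :=
      band_solid hB''band huB'' (habs_w'.le.trans (le_trans inf_le_left inf_le_right))
    have hndisj : ¬ disjt b w' := by
      intro h
      have : |b| ⊓ |w'| = w' := by
        rw [habs_w']
        exact inf_eq_right.mpr (le_trans inf_le_left inf_le_left)
      exact hw'0 (this ▸ h)
    set B' : Set X := B₀ ∩ B'' ∩ D₀ with hB'def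
    have hB'band : IsBand B' := inter_isBand (inter_isBand hB₀band hB''band) hD₀band
    have hB'subB₀ : B' ⊆ B₀ := fun y hy => hy.1.1
    have hB'subB'' : B' ⊆ B'' := fun y hy => hy.1.2
    have hB'subD₀ : B' ⊆ D₀ := fun y hy => hy.2
    have hgood : Good B' := by
      refine ⟨hB'band, t, fun e => (cD D₀)⁻¹ * c e, hts,
        fun e he => mul_ne_zero (inv_ne_zero hc₀) (hc e he), ?_⟩
      have h1 : (b - ∑ e ∈ t, c e • e) ∈ dComp B' := dComp_antitone hB'subB'' hexp
      have h2 : (b - cD D₀ • x) ∈ dComp B' := dComp_antitone hB'subD₀ (hsemi D₀ hD₀𝒟)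
      have h3 : (cD D₀ • x - ∑ e ∈ t, c e • e) ∈ dComp B' := by
        have := sub_mem_dComp h1 h2
        have heq : (b - ∑ e ∈ t, c e • e) - (b - cD D₀ • x)
            = cD D₀ • x - ∑ e ∈ t, c e • e := by abel
        rwa [heq] at this
      have h4 := smul_mem_dComp (cD D₀)⁻¹ h3
      have heq : (cD D₀)⁻¹ • (cD D₀ • x - ∑ e ∈ t, c e • e)
          = x - ∑ e ∈ t, ((cD D₀)⁻¹ * c e) • e := by
        rw [smul_sub, smul_smul, inv_mul_cancel₀ hc₀, one_smul, Finset.smul_sum]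
        congr 1
        exact Finset.sum_congr rfl fun e _ => by rw [smul_smul]
      rwa [heq] at h4
    have hB'𝒞 : B' ∈ 𝒞 := hins B' hgood hB'subB₀
    have hw'B' : w' ∈ B' := ⟨⟨hw'B₀, hw'B''⟩, hw'D₀⟩
    exact hndisj (hbB₀ w' ⟨B', hB'𝒞, hw'B'⟩)
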